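/- arXiv:2601.18935 — 2 statements merged into one kernel-verified Lean document; each statement's English description precedes it below -/
import Mathlib

section
/- Under the Ewens–Pitman model in the large-θ regime θ = λn, the expected number of blocks and the expected number of blocks of each fixed size grow linearly: for every integer r ≥ 0, sup over n ≥ 1 of |E[K⁽ⁿ⁾_{r,n}] − n·𝔪_r| is finite, i.e. E[K⁽ⁿ⁾_{r,n}] = n·𝔪_r + O(1) as n → ∞. -/
open MeasureTheory ProbabilityTheory Filter Set Topology

noncomputable section

/-- At step `h`, the new element creates a new block: the number of blocks (index `0`)
and the number of singleton blocks (index `1`) increase by one, all other counts unchanged. -/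
def IsNewBlock {Ω : Type*} (K : ℕ → ℕ → ℕ → Ω → ℤ) (n h : ℕ) (ω : Ω) : Prop :=
  K n 0 h ω = K n 0 (h - 1) ω + 1 ∧ K n 1 h ω = K n 1 (h - 1) ω + 1 ∧
    ∀ r, 2 ≤ r → K n r h ω = K n r (h - 1) ω

/-- At step `h`, a block of size `s` grows to size `s + 1`. -/
def IsGrowth {Ω : Type*} (K : ℕ → ℕ → ℕ → Ω → ℤ) (n s h : ℕ) (ω : Ω) : Prop :=
  K n s h ω = K n s (h - 1) ω - 1 ∧ K n (s + 1) h ω = K n (s + 1) (h - 1) ω + 1 ∧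
    ∀ r, r ≠ s → r ≠ s + 1 → K n r h ω = K n r (h - 1) ω

/-- The Chinese-restaurant array with parameters `(a, θ = lam * n)`:
`K n r h` is the number of blocks of size `r` (for `r ≥ 1`), resp. the total number of
blocks (for `r = 0`), of the Ewens–Pitman random partition of `{1, …, h}` with
parameters `(a, lam * n)`, built sequentially. -/
structure CRPArray (a lam : ℝ) (Ω : Type*) [MeasurableSpace Ω] where
  P : Measure Ω
  isProb : IsProbabilityMeasure P
  K : ℕ → ℕ → ℕ → Ω → ℤ
  F : ℕ → ℕ → MeasurableSpace Ω
  F_eq : ∀ n h, F n h =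
    ⨆ r : ℕ, ⨆ k ∈ Finset.Icc 1 h, MeasurableSpace.comap (K n r k) ⊤
  F_le : ∀ n h, F n h ≤ (inferInstance : MeasurableSpace Ω)
  K_zero : ∀ n r ω, K n r 0 ω = 0
  K_init_blocks : ∀ n ω, K n 0 1 ω = 1
  K_init_one : ∀ n ω, K n 1 1 ω = 1
  K_init_big : ∀ n r, 2 ≤ r → ∀ ω, K n r 1 ω = 0
  step : ∀ n, 1 ≤ n → ∀ h, 2 ≤ h → h ≤ n → ∀ᵐ ω ∂P,
    IsNewBlock K n h ω ∨ ∃ s, 1 ≤ s ∧ s ≤ h - 1 ∧ IsGrowth K n s h ω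
  condNew : ∀ n, 1 ≤ n → ∀ h, 2 ≤ h → h ≤ n →
    MeasureTheory.condExp (F n (h - 1)) P
        (Set.indicator {ω | IsNewBlock K n h ω} fun _ => (1 : ℝ))
      =ᵐ[P] fun ω => (a * (K n 0 (h - 1) ω : ℝ) + lam * n) / (lam * n + (h : ℝ) - 1)
  condGrowth : ∀ n, 1 ≤ n → ∀ h, 2 ≤ h → h ≤ n → ∀ s, 1 ≤ s → s ≤ h - 1 →
    MeasureTheory.condExp (F n (h - 1)) P
        (Set.indicator {ω | IsGrowth K n s h ω} fun _ => (1 : ℝ))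
      =ᵐ[P] fun ω => ((s : ℝ) - a) * (K n s (h - 1) ω : ℝ) / (lam * n + (h : ℝ) - 1)

/-- The limit function `m_r(x)`; `mFun a lam r 1` is the constant `𝔪_r`. -/
def mFun (a lam : ℝ) (r : ℕ) (x : ℝ) : ℝ :=
  if r = 0 then
    if a = 0 then lam * Real.log ((lam + x) / lam)
    else (lam / a) * (((lam + x) / lam) ^ a - 1)
  else ((∏ i ∈ Finset.range (r - 1), (1 - a + (i : ℝ))) / (r.factorial : ℝ)) *
      x ^ r * lam ^ (1 - a) * (x + lam) ^ (a - (r : ℝ))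

/-- `c_r = (1 - a)_{r↑} / r!`. -/
def cCoef (a : ℝ) (r : ℕ) : ℝ :=
  (∏ i ∈ Finset.range r, (1 - a + (i : ℝ))) / (r.factorial : ℝ)

/-- `a_r(x) = ((lam + x)/lam)^(r - a)`. -/
def aFun (a lam : ℝ) (r : ℕ) (x : ℝ) : ℝ := ((lam + x) / lam) ^ ((r : ℝ) - a)

/-- Limit one-step probabilities `p̄_r(x)`. -/
def pbar (a lam : ℝ) (r : ℕ) (x : ℝ) : ℝ :=
  if r ≤ 1 then ((lam + x) / lam) ^ (a - 1)
  else cCoef a (r - 1) * lam ^ (1 - a) * x ^ (r - 1) * (x + lam) ^ (a - (r : ℝ))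

/-- Limit one-step probabilities `q̄_r(x)`. -/
def qbar (a lam : ℝ) (r : ℕ) (x : ℝ) : ℝ :=
  if r = 0 then 0 else cCoef a r * lam ^ (1 - a) * x ^ r * (x + lam) ^ (a - (r : ℝ) - 1)

/-- `P̄_{i,j}(x)` for `1 ≤ i ≤ j`. -/
def Pbar (a lam : ℝ) (i j : ℕ) (x : ℝ) : ℝ :=
  if j = i ∨ (i = 1 ∧ j = 2) then pbar a lam (i - 1) x + qbar a lam (i - 1) x
  else if j = i + 1 then -qbar a lam (i - 1) x
  else 0

/-- The symmetric family of functions `f_{i,j}(x)`. -/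
def fEntry (a lam : ℝ) (i j : ℕ) (x : ℝ) : ℝ :=
  aFun a lam (min i j - 1) x * aFun a lam (max i j - 1) x *
    (Pbar a lam (min i j) (max i j) x -
      (pbar a lam (min i j - 1) x - qbar a lam (min i j - 1) x) *
        (pbar a lam (max i j - 1) x - qbar a lam (max i j - 1) x))

/-- The limiting covariance matrix entries `Σ_{i,j}`, `1 ≤ i, j ≤ d + 1`. -/
def SigmaMat (a lam : ℝ) (i j : ℕ) : ℝ :=
  ((lam + 1) / lam) ^ ((i : ℝ) + (j : ℝ) - 2 - 2 * a) * ∫ x in (0:ℝ)..1, fEntry a lam i j x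

/-- One-step conditional probability `p^{(n)}_{r, j}` of increasing `K n r`. -/
def pProc {Ω : Type*} (K : ℕ → ℕ → ℕ → Ω → ℤ) (a lam : ℝ) (n r j : ℕ) (ω : Ω) : ℝ :=
  if r ≤ 1 then (a * (K n 0 j ω : ℝ) + lam * n) / (lam * n + j)
  else ((r : ℝ) - 1 - a) * (K n (r - 1) j ω : ℝ) / (lam * n + j)

/-- One-step conditional probability `q^{(n)}_{r, j}` of decreasing `K n r`. -/
def qProc {Ω : Type*} (K : ℕ → ℕ → ℕ → Ω → ℤ) (a lam : ℝ) (n r j : ℕ) (ω : Ω) : ℝ :=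
  if r = 0 then 0 else ((r : ℝ) - a) * (K n r j ω : ℝ) / (lam * n + j)

/-- `a^{(n)}_{r,h} = ∏_{k=1}^{h-1} (lam n + k)/(lam n + k - r + a)`. -/
def aCoef (a lam : ℝ) (n r h : ℕ) : ℝ :=
  ∏ k ∈ Finset.range (h - 1),
    (lam * n + ((k : ℝ) + 1)) / (lam * n + ((k : ℝ) + 1) - (r : ℝ) + a)

/-- `β^{(n)}_{r,k}`. -/
def betaProc {Ω : Type*} (K : ℕ → ℕ → ℕ → Ω → ℤ) (a lam : ℝ) (n r k : ℕ) (ω : Ω) : ℝ :=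
  if r = 0 then lam * n / (lam * n + (k : ℝ)) else pProc K a lam n r k ω

/-- `A^{(n)}_{r,h} = Σ_{k=1}^{h-1} a^{(n)}_{r,k+1} β^{(n)}_{r,k}`. -/
def Acomp {Ω : Type*} (K : ℕ → ℕ → ℕ → Ω → ℤ) (a lam : ℝ) (n r h : ℕ) (ω : Ω) : ℝ :=
  ∑ k ∈ Finset.range (h - 1), aCoef a lam n r (k + 2) * betaProc K a lam n r (k + 1) ω

/-- The compensated rescaled block counts `M^{(n)}_{r,h}`. -/
def Mart {Ω : Type*} (K : ℕ → ℕ → ℕ → Ω → ℤ) (a lam : ℝ) (n r h : ℕ) (ω : Ω) : ℝ :=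
  aCoef a lam n r h * (K n r h ω : ℝ) - Acomp K a lam n r h ω


namespace EPaux


def term (lam c : ℝ) (k : ℕ) (e : ℝ) (x : ℝ) : ℝ := c * x ^ k * (lam + x) ^ e

def mCoef (a lam : ℝ) (r : ℕ) : ℝ :=
  ((∏ i ∈ Finset.range (r - 1), (1 - a + (i : ℝ))) / (r.factorial : ℝ)) * lam ^ (1 - a)

def mDeriv (a lam : ℝ) (r : ℕ) (x : ℝ) : ℝ :=
  if r = 0 then term lam (lam ^ (1 - a)) 0 (a - 1) x
  else term lam (mCoef a lam r * r) (r - 1) (a - (r : ℝ)) x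
    + term lam (mCoef a lam r * (a - (r : ℝ))) r (a - (r : ℝ) - 1) x

variable {a lam : ℝ}

lemma mFun_eq_term (hr : r ≠ 0) : mFun a lam r = term lam (mCoef a lam r) r (a - (r : ℝ)) := by
  funext x
  simp only [mFun, term, mCoef, hr, if_false]
  rw [add_comm x lam]
  ring

lemma mFun_zero_eq (hlam : 0 < lam) (ha : a ≠ 0) {x : ℝ} (hx : 0 < lam + x) :
    mFun a lam 0 x = (lam / a) * ((lam + x) ^ a / lam ^ a - 1) := by
  simp only [mFun, if_true, if_false, ha, eq_self_iff_true, if_neg ha]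
  rw [Real.div_rpow hx.le hlam.le]

lemma lam_rpow_one_sub (hlam : 0 < lam) : lam ^ (1 - a) = lam / lam ^ a := by
  rw [Real.rpow_sub hlam, Real.rpow_one]

/-- key algebraic identity: `a * m₀(x) + lam = lam^(1-a) * (lam+x)^a`. -/
lemma am0 (hlam : 0 < lam) {x : ℝ} (hx : 0 < lam + x) :
    a * mFun a lam 0 x + lam = lam ^ (1 - a) * (lam + x) ^ a := by
  rcases eq_or_ne a 0 with ha | ha
  · subst ha
    simp [Real.rpow_one, Real.rpow_zero]
  · rw [mFun_zero_eq hlam ha hx, lam_rpow_one_sub hlam]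
    have hl : lam ^ a ≠ 0 := (Real.rpow_pos_of_pos hlam a).ne'
    field_simp
    ring

lemma mCoef_one : mCoef a lam 1 = lam ^ (1 - a) := by
  simp [mCoef]

lemma mCoef_rel {r : ℕ} (hr : 2 ≤ r) :
    (r : ℝ) * mCoef a lam r = ((r : ℝ) - 1 - a) * mCoef a lam (r - 1) := by
  obtain ⟨s, rfl⟩ : ∃ s, r = s + 2 := ⟨r - 2, by omega⟩
  simp only [mCoef, show s + 2 - 1 = s + 1 from rfl, show s + 1 - 1 = s from rfl]
  rw [Finset.prod_range_succ, Nat.factorial_succ (s + 1)]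
  push_cast
  have h1 : ((s + 1).factorial : ℝ) ≠ 0 := by positivity
  field_simp
  ring

/-- exponent-shift: `(lam+x)^(e+1) = (lam+x)^e * (lam+x)`. -/
lemma rpow_succ {x : ℝ} (hx : 0 < lam + x) (e : ℝ) :
    (lam + x) ^ (e + 1) = (lam + x) ^ e * (lam + x) := by
  rw [Real.rpow_add hx, Real.rpow_one]

/-- ODE, case r = 0. -/
lemma ode0 (hlam : 0 < lam) {x : ℝ} (hx : 0 ≤ x) :
    mDeriv a lam 0 x = (a * mFun a lam 0 x + lam) / (lam + x) := by
  have hx' : 0 < lam + x := by positivity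
  rw [am0 hlam hx']
  simp only [mDeriv, if_true, eq_self_iff_true, term, pow_zero, mul_one]
  rw [show a - 1 = (a - 1) + 1 - 1 by ring, show (a-1) + 1 = a by ring]
  rw [show a = (a - 1) + 1 by ring, rpow_succ hx']
  field_simp
  ring

/-- ODE, case r = 1. -/
lemma ode1 (hlam : 0 < lam) {x : ℝ} (hx : 0 ≤ x) :
    mDeriv a lam 1 x =
      (a * mFun a lam 0 x + lam - (1 - a) * mFun a lam 1 x) / (lam + x) := by
  have hx' : 0 < lam + x := by positivity
  rw [am0 hlam hx', mFun_eq_term one_ne_zero]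
  simp only [mDeriv, one_ne_zero, if_false, term, mCoef_one]
  have e1 : (lam + x) ^ a = (lam + x) ^ (a - 1) * (lam + x) := by
    rw [← rpow_succ hx']; ring_nf
  have e2 : (lam + x) ^ (a - 1) = (lam + x) ^ (a - 1 - 1) * (lam + x) := by
    rw [← rpow_succ hx']; ring_nf
  rw [e1]
  rw [show a - (1:ℕ) = a - 1 by norm_num, show a - 1 - 1 = a - 1 - 1 by ring]
  rw [e2]
  field_simp
  ring

/-- ODE, case r ≥ 2. -/
lemma oder (hlam : 0 < lam) {r : ℕ} (hr : 2 ≤ r) {x : ℝ} (hx : 0 ≤ x) :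
    mDeriv a lam r x =
      (((r : ℝ) - 1 - a) * mFun a lam (r - 1) x - ((r : ℝ) - a) * mFun a lam r x) /
        (lam + x) := by
  have hx' : 0 < lam + x := by positivity
  have hr0 : r ≠ 0 := by omega
  have hr1 : r - 1 ≠ 0 := by omega
  rw [mFun_eq_term hr0, mFun_eq_term hr1]
  simp only [mDeriv, hr0, if_false, term]
  have hcast : ((r - 1 : ℕ) : ℝ) = (r : ℝ) - 1 := by
    push_cast [Nat.cast_sub (by omega : 1 ≤ r)]; ring
  have hxp : x ^ r = x ^ (r - 1) * x := by
    conv_lhs => rw [show r = (r - 1) + 1 by omega, pow_succ]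
  have e1 : (lam + x) ^ (a - ((r:ℝ) - 1)) = (lam + x) ^ (a - (r:ℝ) - 1) * (lam + x) ^ 2 := by
    rw [show a - ((r:ℝ) - 1) = (a - (r:ℝ) - 1) + 2 by ring, Real.rpow_add hx',
      show (2:ℝ) = ((2:ℕ):ℝ) by norm_num, Real.rpow_natCast]
  have e2 : (lam + x) ^ (a - (r:ℝ)) = (lam + x) ^ (a - (r:ℝ) - 1) * (lam + x) := by
    rw [← rpow_succ hx']; ring_nf
  have hrel := mCoef_rel (a := a) (lam := lam) hr
  rw [hcast, eq_div_iff hx'.ne', e1, e2, hxp]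
  linear_combination (x ^ (r - 1) * ((lam + x) ^ (a - (r:ℝ) - 1)) * (lam + x) ^ 2) * hrel

lemma mFun_hasDerivAt (hlam : 0 < lam) (r : ℕ) {x : ℝ} (hx : 0 ≤ x) :
    HasDerivAt (mFun a lam r) (mDeriv a lam r x) x := by
  have hx' : 0 < lam + x := by positivity
  have hop : ∀ᶠ y in nhds x, 0 < lam + y := by
    have : Continuous fun y : ℝ => lam + y := continuous_const.add continuous_id
    exact (this.tendsto x).eventually (eventually_gt_nhds hx')
  rcases Nat.eq_zero_or_pos r with hr | hr
  · subst hr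
    simp only [mDeriv, if_pos rfl]
    rcases eq_or_ne a 0 with ha | ha
    · -- a = 0 : lam * log((lam+x)/lam)
      subst ha
      have h1 : HasDerivAt (fun y : ℝ => lam * (Real.log (lam + y) - Real.log lam))
          (lam * (lam + x)⁻¹) x := by
        have := (Real.hasDerivAt_log hx'.ne').comp x ((hasDerivAt_id x).const_add lam)
        simpa using ((this.sub_const (Real.log lam)).const_mul lam)
      refine h1.congr_of_eventuallyEq ?_ |>.congr_deriv ?_
      · filter_upwards [hop] with y hy
        simp [mFun, Real.log_div hy.ne' hlam.ne']
      · simp [mDeriv, term, sub_zero, zero_sub, Real.rpow_one, Real.rpow_neg_one]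
    · -- a ≠ 0
      have h1 : HasDerivAt (fun y : ℝ => (lam / a) * ((lam + y) ^ a / lam ^ a - 1))
          (lam ^ (1 - a) * (lam + x) ^ (a - 1)) x := by
        have hpow : HasDerivAt (fun y : ℝ => (lam + y) ^ a) (a * (lam + x) ^ (a - 1)) x := by
          have := (Real.hasDerivAt_rpow_const (p := a) (Or.inl hx'.ne')).comp x
            ((hasDerivAt_id x).const_add lam)
          simpa [Function.comp_def] using this
        have := (((hpow.div_const (lam ^ a)).sub_const 1).const_mul (lam / a))
        refine this.congr_deriv ?_
        rw [lam_rpow_one_sub hlam]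
        field_simp
      refine h1.congr_of_eventuallyEq ?_ |>.congr_deriv ?_
      · filter_upwards [hop] with y hy
        exact mFun_zero_eq hlam ha hy
      · simp [term]
  · have hr' : r ≠ 0 := hr.ne'
    rw [mFun_eq_term hr']
    simp only [mDeriv, hr', if_false]
    have h1 : HasDerivAt (fun y : ℝ => y ^ r) ((r : ℝ) * x ^ (r - 1)) x := hasDerivAt_pow r x
    have h2 : HasDerivAt (fun y : ℝ => (lam + y) ^ (a - (r : ℝ)))
        ((a - (r : ℝ)) * (lam + x) ^ (a - (r : ℝ) - 1)) x := by
      have := (Real.hasDerivAt_rpow_const (p := a - (r : ℝ)) (Or.inl hx'.ne')).comp x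
        ((hasDerivAt_id x).const_add lam)
      simpa [Function.comp_def] using this
    have := ((h1.const_mul (mCoef a lam r)).mul h2)
    refine this.congr_deriv ?_
    simp only [term]
    ring

lemma term_hasDerivAt (c : ℝ) (k : ℕ) (e : ℝ) {x : ℝ} (hx : 0 < lam + x) :
    HasDerivAt (term lam c k e)
      (term lam (c * k) (k - 1) e x + term lam (c * e) k (e - 1) x) x := by
  have h1 : HasDerivAt (fun x : ℝ => x ^ k) ((k : ℝ) * x ^ (k - 1)) x := hasDerivAt_pow k x
  have h2 : HasDerivAt (fun x : ℝ => (lam + x) ^ e) (e * (lam + x) ^ (e - 1)) x := by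
    have := (Real.hasDerivAt_rpow_const (p := e) (Or.inl hx.ne')).comp x
      ((hasDerivAt_id x).const_add lam)
    simpa [Function.comp_def] using this
  have := ((h1.const_mul c).mul h2)
  refine this.congr_deriv ?_
  simp only [term]
  ring

lemma term_continuousOn (hlam : 0 < lam) (c : ℝ) (k : ℕ) (e : ℝ) :
    ContinuousOn (term lam c k e) (Set.Icc 0 1) := by
  intro x hx
  have hx' : 0 < lam + x := by have := hx.1; positivity
  refine (ContinuousAt.continuousWithinAt ?_)
  have : ContinuousAt (fun x : ℝ => (lam + x) ^ e) x :=
    (Real.continuousAt_rpow_const _ _ (Or.inl hx'.ne')).comp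
      ((continuous_const.add continuous_id).continuousAt)
  exact (continuousAt_const.mul (continuousAt_pow _ _)).mul this

lemma mDeriv_continuousOn (hlam : 0 < lam) (r : ℕ) :
    ContinuousOn (mDeriv a lam r) (Set.Icc 0 1) := by
  rcases eq_or_ne r 0 with hr | hr
  · subst hr
    have : mDeriv a lam 0 = term lam (lam ^ (1 - a)) 0 (a - 1) := by
      funext x; simp [mDeriv]
    rw [this]
    exact term_continuousOn hlam _ _ _
  · have : mDeriv a lam r = fun x => term lam (mCoef a lam r * r) (r - 1) (a - (r : ℝ)) x
        + term lam (mCoef a lam r * (a - (r : ℝ))) r (a - (r : ℝ) - 1) x := by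
      funext x; simp [mDeriv, hr]
    rw [this]
    exact (term_continuousOn hlam _ _ _).add (term_continuousOn hlam _ _ _)

/-- Lipschitz-type bound from a derivative with continuous formula on `[0,1]`. -/
lemma lip_on_unit {f f' : ℝ → ℝ}
    (hf : ∀ x ∈ Set.Icc (0:ℝ) 1, HasDerivAt f (f' x) x)
    (hc : ContinuousOn f' (Set.Icc 0 1)) :
    ∃ L, 0 ≤ L ∧ ∀ x ∈ Set.Icc (0:ℝ) 1, ∀ y ∈ Set.Icc (0:ℝ) 1, |f y - f x| ≤ L * |y - x| := by
  obtain ⟨C, hC⟩ := (isCompact_Icc (a := (0:ℝ)) (b := 1)).exists_bound_of_continuousOn hc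
  refine ⟨max C 0, le_max_right _ _, fun x hx y hy => ?_⟩
  have := Convex.norm_image_sub_le_of_norm_hasDerivWithin_le
    (f := f) (f' := f') (s := Set.Icc (0:ℝ) 1) (C := max C 0)
    (fun z hz => (hf z hz).hasDerivWithinAt)
    (fun z hz => le_trans (hC z hz) (le_max_left _ _)) (convex_Icc _ _) hx hy
  simpa [Real.norm_eq_abs] using this

/-- MVT approximation: `|f y - f x - f' x * (y - x)| ≤ L * (y-x)^2`. -/
lemma mvt_approx {f f' : ℝ → ℝ} {L : ℝ}
    (hf : ∀ x ∈ Set.Icc (0:ℝ) 1, HasDerivAt f (f' x) x)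
    (hL : 0 ≤ L)
    (hlip : ∀ x ∈ Set.Icc (0:ℝ) 1, ∀ y ∈ Set.Icc (0:ℝ) 1, |f' y - f' x| ≤ L * |y - x|)
    {x y : ℝ} (hx : 0 ≤ x) (hxy : x < y) (hy : y ≤ 1) :
    |f y - f x - f' x * (y - x)| ≤ L * (y - x) ^ 2 := by
  have hsub : Set.Icc x y ⊆ Set.Icc (0:ℝ) 1 := fun z hz =>
    ⟨hx.trans hz.1, hz.2.trans hy⟩
  obtain ⟨c, hc, hceq⟩ := exists_hasDerivAt_eq_slope f f' hxy
    (fun z hz => (hf z (hsub hz)).continuousAt.continuousWithinAt)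
    (fun z hz => hf z (hsub (Set.mem_Icc.2 ⟨hz.1.le, hz.2.le⟩)))
  have hxy' : y - x > 0 := by linarith
  have : f y - f x = f' c * (y - x) := by
    field_simp at hceq
    linarith [hceq]
  rw [this]
  have hcI : c ∈ Set.Icc (0:ℝ) 1 := hsub ⟨hc.1.le, hc.2.le⟩
  have hxI : x ∈ Set.Icc (0:ℝ) 1 := ⟨hx, by linarith⟩
  have h1 : |f' c - f' x| ≤ L * |c - x| := hlip x hxI c hcI
  have h2 : |c - x| ≤ y - x := by
    rw [abs_of_nonneg (by linarith [hc.1])]; linarith [hc.2]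
  calc |f' c * (y - x) - f' x * (y - x)| = |f' c - f' x| * (y - x) := by
        rw [← sub_mul, abs_mul, abs_of_pos hxy']
    _ ≤ (L * (y - x)) * (y - x) := by
        refine mul_le_mul_of_nonneg_right (h1.trans ?_) hxy'.le
        exact mul_le_mul_of_nonneg_left h2 hL
    _ = L * (y - x) ^ 2 := by ring

/-- discrete Gronwall-type bound -/
lemma seq_bound {n : ℕ} {K δ B : ℝ} (hK : 1 ≤ K) (hδ : 0 ≤ δ) (hB : 0 ≤ B)
    {u : ℕ → ℝ} (hpos : ∀ h, 0 ≤ u h) (h1 : u 1 ≤ B)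
    (hstep : ∀ h, 2 ≤ h → h ≤ n → u h ≤ K * u (h - 1) + δ) :
    ∀ h, 1 ≤ h → h ≤ n → u h ≤ K ^ n * (B + n * δ) := by
  have hK0 : (0:ℝ) ≤ K := by linarith
  have hKpow : ∀ m : ℕ, 1 ≤ K ^ m := fun m => one_le_pow₀ hK
  have main : ∀ h, 1 ≤ h → h ≤ n → u h ≤ K ^ (h - 1) * (B + (h - 1 : ℕ) * δ) := by
    intro h
    induction h with
    | zero => intro h0; omega
    | succ m ih =>
      intro _ hle
      rcases Nat.eq_zero_or_pos m with rfl | hm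
      · simpa using h1
      · have hstep' := hstep (m + 1) (by omega) hle
        have ihm := ih (by omega) (by omega)
        simp only [Nat.add_sub_cancel] at hstep' ⊢
        have hKm : K * K ^ (m - 1) = K ^ m := by
          rw [← pow_succ']
          congr 1
          omega
        have hc : ((m - 1 : ℕ) : ℝ) = (m : ℝ) - 1 := by
          push_cast [Nat.cast_sub hm]; ring
        calc u (m + 1) ≤ K * u m + δ := hstep'
          _ ≤ K * (K ^ (m - 1) * (B + (m - 1 : ℕ) * δ)) + δ := by
              have := mul_le_mul_of_nonneg_left ihm hK0
              linarith
          _ = K ^ m * (B + ((m:ℝ) - 1) * δ) + δ := by rw [hc, ← mul_assoc, hKm]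
          _ ≤ K ^ m * (B + (m:ℕ) * δ) := by
              have h2 : δ ≤ K ^ m * δ := le_mul_of_one_le_left hδ (hKpow m)
              push_cast
              nlinarith [hKpow m]
  intro h hh hn
  calc u h ≤ K ^ (h - 1) * (B + (h - 1 : ℕ) * δ) := main h hh hn
    _ ≤ K ^ n * (B + n * δ) := by
        have h1' : K ^ (h - 1) ≤ K ^ n := pow_le_pow_right₀ hK (by omega)
        have h2' : B + ((h - 1 : ℕ) : ℝ) * δ ≤ B + (n : ℝ) * δ := by
          have : ((h - 1 : ℕ) : ℝ) ≤ (n : ℝ) := by exact_mod_cast Nat.le_of_lt_succ (by omega)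
          nlinarith
        have h3' : (0:ℝ) ≤ B + ((h-1:ℕ):ℝ) * δ := by positivity
        nlinarith [hKpow n]


def cCpl (a : ℝ) (r : ℕ) : ℝ := if r = 1 then a else (r : ℝ) - 1 - a

/-- Unified ODE for `r ≥ 1`. -/
lemma odeu (hlam : 0 < lam) {r : ℕ} (hr : 1 ≤ r) {x : ℝ} (hx : 0 ≤ x) :
    mDeriv a lam r x =
      (cCpl a r * mFun a lam (r - 1) x + (if r = 1 then lam else 0)
        - ((r : ℝ) - a) * mFun a lam r x) / (lam + x) := by
  rcases eq_or_ne r 1 with rfl | hr1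
  · simpa [cCpl] using ode1 (a := a) hlam hx
  · have hr2 : 2 ≤ r := by omega
    simp only [cCpl, hr1, if_false, add_zero]
    exact oder hlam hr2 hx

lemma mFun_zero_val (hlam : 0 < lam) (r : ℕ) : mFun a lam r 0 = 0 := by
  rcases eq_or_ne r 0 with rfl | hr
  · rcases eq_or_ne a 0 with rfl | ha
    · simp [mFun, div_self hlam.ne']
    · simp [mFun, ha, div_self hlam.ne', Real.one_rpow]
  · simp [mFun, hr, zero_pow hr]

lemma mFun_lip (hlam : 0 < lam) (r : ℕ) :
    ∃ L, 0 ≤ L ∧ (∀ x ∈ Set.Icc (0:ℝ) 1, ∀ y ∈ Set.Icc (0:ℝ) 1,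
      |mFun a lam r y - mFun a lam r x| ≤ L * |y - x|) :=
  lip_on_unit (fun x hx => mFun_hasDerivAt hlam r hx.1) (mDeriv_continuousOn hlam r)

lemma mDeriv_lip (hlam : 0 < lam) (r : ℕ) :
    ∃ L, 0 ≤ L ∧ (∀ x ∈ Set.Icc (0:ℝ) 1, ∀ y ∈ Set.Icc (0:ℝ) 1,
      |mDeriv a lam r y - mDeriv a lam r x| ≤ L * |y - x|) := by
  rcases eq_or_ne r 0 with rfl | hr
  · have heq : mDeriv a lam 0 = term lam (lam ^ (1 - a)) 0 (a - 1) := by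
      funext x; simp [mDeriv]
    rw [heq]
    refine lip_on_unit (fun x hx => term_hasDerivAt _ _ _ (by have := hx.1; positivity)) ?_
    exact (term_continuousOn hlam _ _ _).add (term_continuousOn hlam _ _ _)
  · have heq : mDeriv a lam r = fun x => term lam (mCoef a lam r * r) (r - 1) (a - (r : ℝ)) x
        + term lam (mCoef a lam r * (a - (r : ℝ))) r (a - (r : ℝ) - 1) x := by
      funext x; simp [mDeriv, hr]
    rw [heq]
    refine lip_on_unit (fun x hx => HasDerivAt.add
      (term_hasDerivAt _ _ _ (by have := hx.1; positivity))
      (term_hasDerivAt _ _ _ (by have := hx.1; positivity))) ?_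
    exact (((term_continuousOn hlam _ _ _).add (term_continuousOn hlam _ _ _)).add
      (((term_continuousOn hlam _ _ _).add (term_continuousOn hlam _ _ _))))

/-- drift approximation along the grid -/
lemma drift_approx (hlam : 0 < lam) (r : ℕ) {M : ℝ} (hM0 : 0 ≤ M)
    (hM : ∀ x ∈ Set.Icc (0:ℝ) 1, ∀ y ∈ Set.Icc (0:ℝ) 1,
      |mDeriv a lam r y - mDeriv a lam r x| ≤ M * |y - x|)
    {n h : ℕ} (hn : 1 ≤ n) (hh : 1 ≤ h) (hhn : h ≤ n) :
    |(n:ℝ) * mFun a lam r ((h:ℝ)/n) - (n:ℝ) * mFun a lam r (((h:ℝ)-1)/n)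
      - mDeriv a lam r (((h:ℝ)-1)/n)| ≤ M / n := by
  have hn0 : (0:ℝ) < n := by exact_mod_cast hn
  have hh1 : (1:ℝ) ≤ (h:ℝ) := by exact_mod_cast hh
  have hhn' : (h:ℝ) ≤ (n:ℝ) := by exact_mod_cast hhn
  have hx0 : (0:ℝ) ≤ ((h:ℝ)-1)/n := by apply div_nonneg _ hn0.le; linarith
  have hxy : ((h:ℝ)-1)/n < (h:ℝ)/n := div_lt_div_of_pos_right (by linarith) hn0
  have hy1 : (h:ℝ)/n ≤ 1 := by
    rw [div_le_one hn0]; exact hhn'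
  have hdiff : (h:ℝ)/n - ((h:ℝ)-1)/n = 1/n := by
    rw [div_sub_div_same]; norm_num
  have happ := mvt_approx (f := mFun a lam r) (f' := mDeriv a lam r)
    (fun x hx => mFun_hasDerivAt hlam r hx.1) hM0 hM hx0 hxy hy1
  rw [hdiff] at happ
  have hkey : (n:ℝ) * mFun a lam r ((h:ℝ)/n) - (n:ℝ) * mFun a lam r (((h:ℝ)-1)/n)
      - mDeriv a lam r (((h:ℝ)-1)/n)
      = (n:ℝ) * (mFun a lam r ((h:ℝ)/n) - mFun a lam r (((h:ℝ)-1)/n)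
        - mDeriv a lam r (((h:ℝ)-1)/n) * (1/n)) := by
    field_simp
  rw [hkey, abs_mul, abs_of_pos hn0]
  calc (n:ℝ) * |mFun a lam r ((h:ℝ)/n) - mFun a lam r (((h:ℝ)-1)/n)
        - mDeriv a lam r (((h:ℝ)-1)/n) * (1/n)| ≤ (n:ℝ) * (M * (1/n)^2) := by
        exact mul_le_mul_of_nonneg_left happ hn0.le
    _ = M / n := by field_simp

/-- The deterministic recursion hypothesis. -/
def RecHyp (a lam : ℝ) (n : ℕ) (e : ℕ → ℕ → ℝ) : Prop :=
  (∀ r h, 1 ≤ h → h ≤ n → |e r h| ≤ n) ∧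
  e 0 1 = 1 ∧ e 1 1 = 1 ∧ (∀ r, 2 ≤ r → e r 1 = 0) ∧
  ∀ h, 2 ≤ h → h ≤ n →
    (e 0 h = e 0 (h-1) + (a * e 0 (h-1) + lam * n) / (lam * n + h - 1)) ∧
    ∀ r, 1 ≤ r → e r h = e r (h-1)
      + (cCpl a r * e (r-1) (h-1) + (if r = 1 then lam else 0) * n) / (lam * n + h - 1)
      - ((r:ℝ) - a) * e r (h-1) / (lam * n + h - 1)

set_option maxHeartbeats 2000000 in
theorem detAll (ha0 : 0 ≤ a) (ha1 : a < 1) (hlam : 0 < lam) (r : ℕ) :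
    ∃ C, 0 ≤ C ∧ ∀ n : ℕ, 1 ≤ n → ∀ e : ℕ → ℕ → ℝ, RecHyp a lam n e →
      ∀ h, 1 ≤ h → h ≤ n → |e r h - (n:ℝ) * mFun a lam r ((h:ℝ)/n)| ≤ C := by
  induction r with
  | zero =>
    obtain ⟨L, hL0, hLip⟩ := mFun_lip (a := a) hlam 0
    obtain ⟨M, hM0, hMd⟩ := mDeriv_lip (a := a) hlam 0
    refine ⟨Real.exp (a/lam) * (1 + L + M), by positivity, ?_⟩
    intro n hn e hRec
    obtain ⟨hbd, h01, h11, hbig, hrec⟩ := hRec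
    have hn0 : (0:ℝ) < n := by exact_mod_cast hn
    have hln : 0 < lam * n := by positivity
    set K : ℝ := 1 + a / (lam * n) with hK_def
    have hK1 : 1 ≤ K := by
      rw [hK_def]
      have : 0 ≤ a / (lam * n) := by positivity
      linarith
    have hKn : K ^ n ≤ Real.exp (a / lam) := by
      have h1 : K ≤ Real.exp (a / (lam * n)) := by
        have := Real.add_one_le_exp (a / (lam * n))
        linarith
      have h2 : K ^ n ≤ Real.exp (a / (lam * n)) ^ n :=
        pow_le_pow_left₀ (by linarith) h1 n
      rwa [← Real.exp_nat_mul, show (n:ℝ) * (a / (lam * n)) = a / lam by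
        field_simp] at h2
    -- base bound
    have hbase : |e 0 1 - (n:ℝ) * mFun a lam 0 ((1:ℝ)/n)| ≤ 1 + L := by
      have hmem : (1:ℝ)/n ∈ Set.Icc (0:ℝ) 1 := by
        constructor
        · positivity
        · rw [div_le_one hn0]; exact_mod_cast hn
      have h0mem : (0:ℝ) ∈ Set.Icc (0:ℝ) 1 := by constructor <;> norm_num
      have := hLip 0 h0mem ((1:ℝ)/n) hmem
      rw [mFun_zero_val hlam 0, sub_zero] at this
      have hm : |(n:ℝ) * mFun a lam 0 ((1:ℝ)/n)| ≤ L := by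
        rw [abs_mul, abs_of_pos hn0]
        calc (n:ℝ) * |mFun a lam 0 ((1:ℝ)/n)| ≤ (n:ℝ) * (L * |(1:ℝ)/n - 0|) := by
              apply mul_le_mul_of_nonneg_left ?_ hn0.le
              simpa using this
          _ = L := by rw [sub_zero, abs_of_pos (by positivity : (0:ℝ) < 1/(n:ℝ))]; field_simp
      rw [h01]
      calc |1 - (n:ℝ) * mFun a lam 0 ((1:ℝ)/n)| ≤ |(1:ℝ)| + |(n:ℝ) * mFun a lam 0 ((1:ℝ)/n)| :=
            abs_sub _ _
        _ ≤ 1 + L := by rw [abs_one]; linarith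
    -- step bound
    have hstep : ∀ h, 2 ≤ h → h ≤ n →
        |e 0 h - (n:ℝ) * mFun a lam 0 ((h:ℝ)/n)| ≤
          K * |e 0 (h-1) - (n:ℝ) * mFun a lam 0 (((h-1:ℕ):ℝ)/n)| + M / n := by
      intro h hh2 hhn
      have hcast : ((h-1:ℕ):ℝ) = (h:ℝ) - 1 := by
        have : 1 ≤ h := by omega
        push_cast [Nat.cast_sub this]
        ring
      rw [hcast]
      have hh1 : (1:ℝ) ≤ (h:ℝ) := by exact_mod_cast (by omega : 1 ≤ h)
      have hhn' : (h:ℝ) ≤ (n:ℝ) := by exact_mod_cast hhn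
      set xb : ℝ := ((h:ℝ) - 1)/n with hxb_def
      have hxb0 : 0 ≤ xb := by apply div_nonneg _ hn0.le; linarith
      set d : ℝ := lam * n + h - 1 with hd_def
      have hd0 : 0 < d := by
        have : (2:ℝ) ≤ (h:ℝ) := by exact_mod_cast hh2
        simp only [hd_def]; nlinarith
      have hdn : lam + xb = d / n := by
        simp only [hxb_def, hd_def]; field_simp; ring
      have hode : mDeriv a lam 0 xb = (a * ((n:ℝ) * mFun a lam 0 xb) + lam * n) / d := by
        rw [ode0 hlam hxb0, hdn, div_div_eq_mul_div]
        ring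
      have hrec0 := (hrec h hh2 hhn).1
      rw [show lam * (n:ℝ) + (h:ℝ) - 1 = d from hd_def.symm] at hrec0
      have hdrift := drift_approx hlam 0 hM0 hMd hn (by omega : 1 ≤ h) hhn
      rw [show ((h:ℝ) - 1)/(n:ℝ) = xb from hxb_def.symm] at hdrift
      have key : e 0 h - (n:ℝ) * mFun a lam 0 ((h:ℝ)/n)
          = (1 + a/d) * (e 0 (h-1) - (n:ℝ) * mFun a lam 0 xb)
            - ((n:ℝ) * mFun a lam 0 ((h:ℝ)/n) - (n:ℝ) * mFun a lam 0 xb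
              - mDeriv a lam 0 xb) := by
        rw [hrec0, hode]
        field_simp [hd0.ne']
        ring
      rw [key]
      have hKd : 1 + a/d ≤ K := by
        have hdl : lam * n ≤ d := by
          have : (2:ℝ) ≤ (h:ℝ) := by exact_mod_cast hh2
          simp only [hd_def]; linarith
        have : a / d ≤ a / (lam * n) := div_le_div_of_nonneg_left ha0 hln hdl
        simp only [hK_def]; linarith
      have hKd0 : 0 ≤ 1 + a/d := by positivity
      calc |(1 + a/d) * (e 0 (h-1) - (n:ℝ) * mFun a lam 0 xb)
            - ((n:ℝ) * mFun a lam 0 ((h:ℝ)/n) - (n:ℝ) * mFun a lam 0 xb - mDeriv a lam 0 xb)|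
          ≤ |(1 + a/d) * (e 0 (h-1) - (n:ℝ) * mFun a lam 0 xb)|
            + |(n:ℝ) * mFun a lam 0 ((h:ℝ)/n) - (n:ℝ) * mFun a lam 0 xb - mDeriv a lam 0 xb| :=
            abs_sub _ _
        _ ≤ K * |e 0 (h-1) - (n:ℝ) * mFun a lam 0 xb| + M / n := by
            rw [abs_mul, abs_of_nonneg hKd0]
            have := mul_le_mul_of_nonneg_right hKd (abs_nonneg (e 0 (h-1) - (n:ℝ) * mFun a lam 0 xb))
            nlinarith [hdrift, abs_nonneg (e 0 (h-1) - (n:ℝ) * mFun a lam 0 xb)]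
    -- conclude
    intro h hh hhn
    have := seq_bound (n := n) hK1 (by positivity : (0:ℝ) ≤ M / n) (by positivity : (0:ℝ) ≤ 1 + L)
      (u := fun k => |e 0 k - (n:ℝ) * mFun a lam 0 ((k:ℝ)/n)|)
      (fun k => abs_nonneg _) (by simpa using hbase) hstep h hh hhn
    calc |e 0 h - (n:ℝ) * mFun a lam 0 ((h:ℝ)/n)| ≤ K ^ n * ((1 + L) + n * (M/n)) := this
      _ = K ^ n * (1 + L + M) := by rw [mul_div_cancel₀]; exact hn0.ne'
      _ ≤ Real.exp (a/lam) * (1 + L + M) := by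
          apply mul_le_mul_of_nonneg_right hKn (by positivity)
  | succ r ih =>
    obtain ⟨C', hC'0, hC'⟩ := ih
    set s := r + 1 with hs_def
    have hs1 : 1 ≤ s := by omega
    obtain ⟨L, hL0, hLip⟩ := mFun_lip (a := a) hlam s
    obtain ⟨M, hM0, hMd⟩ := mDeriv_lip (a := a) hlam s
    set δ : ℝ := (s : ℝ) * C' / lam + M with hδ_def
    have hδ0 : 0 ≤ δ := by positivity
    refine ⟨max (1 + L + δ) ((1 + L) * ((s:ℝ)/lam)), le_max_of_le_left (by positivity), ?_⟩
    intro n hn e hRec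
    have hn0 : (0:ℝ) < n := by exact_mod_cast hn
    have hln : 0 < lam * n := by positivity
    obtain ⟨hbd, h01, h11, hbig, hrec⟩ := hRec
    by_cases hsize : (s:ℝ) ≤ lam * n + 1
    · -- main case
      intro h hh hhn
      -- base bound
      have hbase : |e s 1 - (n:ℝ) * mFun a lam s ((1:ℝ)/n)| ≤ 1 + L := by
        have hmem : (1:ℝ)/n ∈ Set.Icc (0:ℝ) 1 := by
          constructor
          · positivity
          · rw [div_le_one hn0]; exact_mod_cast hn
        have h0mem : (0:ℝ) ∈ Set.Icc (0:ℝ) 1 := by constructor <;> norm_num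
        have hlip1 := hLip 0 h0mem ((1:ℝ)/n) hmem
        rw [mFun_zero_val hlam s, sub_zero] at hlip1
        have hm : |(n:ℝ) * mFun a lam s ((1:ℝ)/n)| ≤ L := by
          rw [abs_mul, abs_of_pos hn0]
          calc (n:ℝ) * |mFun a lam s ((1:ℝ)/n)| ≤ (n:ℝ) * (L * |(1:ℝ)/n - 0|) := by
                apply mul_le_mul_of_nonneg_left ?_ hn0.le
                simpa using hlip1
            _ = L := by rw [sub_zero, abs_of_pos (by positivity : (0:ℝ) < 1/(n:ℝ))]; field_simp
        have he1 : |e s 1| ≤ 1 := by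
          rcases eq_or_ne s 1 with h1 | h1
          · rw [h1, h11]; norm_num
          · rw [hbig s (by omega)]; norm_num
        calc |e s 1 - (n:ℝ) * mFun a lam s ((1:ℝ)/n)|
            ≤ |e s 1| + |(n:ℝ) * mFun a lam s ((1:ℝ)/n)| := abs_sub _ _
          _ ≤ 1 + L := by linarith
      -- step bound
      have hstep : ∀ h, 2 ≤ h → h ≤ n →
          |e s h - (n:ℝ) * mFun a lam s ((h:ℝ)/n)| ≤
            1 * |e s (h-1) - (n:ℝ) * mFun a lam s (((h-1:ℕ):ℝ)/n)| + δ / n := by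
        intro h hh2 hhn
        have hcast : ((h-1:ℕ):ℝ) = (h:ℝ) - 1 := by
          have : 1 ≤ h := by omega
          push_cast [Nat.cast_sub this]
          ring
        rw [hcast, one_mul]
        have hh1 : (1:ℝ) ≤ (h:ℝ) := by exact_mod_cast (by omega : 1 ≤ h)
        have hhn' : (h:ℝ) ≤ (n:ℝ) := by exact_mod_cast hhn
        set xb : ℝ := ((h:ℝ) - 1)/n with hxb_def
        have hxb0 : 0 ≤ xb := by apply div_nonneg _ hn0.le; linarith
        have hxb1 : xb ≤ 1 := by
          rw [hxb_def, div_le_one hn0]; linarith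
        set d : ℝ := lam * n + h - 1 with hd_def
        have hd0 : 0 < d := by
          have : (2:ℝ) ≤ (h:ℝ) := by exact_mod_cast hh2
          simp only [hd_def]; nlinarith
        have hdl : lam * n ≤ d := by
          have : (2:ℝ) ≤ (h:ℝ) := by exact_mod_cast hh2
          simp only [hd_def]; linarith
        have hds : (s:ℝ) - a ≤ d := by
          have : (2:ℝ) ≤ (h:ℝ) := by exact_mod_cast hh2
          simp only [hd_def]; nlinarith
        have hdn : lam + xb = d / n := by
          simp only [hxb_def, hd_def]; field_simp; ring
        have hode : mDeriv a lam s xb =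
            (cCpl a s * ((n:ℝ) * mFun a lam r xb) + (if s = 1 then lam else 0) * n
              - ((s:ℝ) - a) * ((n:ℝ) * mFun a lam s xb)) / d := by
          rw [odeu hlam hs1 hxb0, hdn, div_div_eq_mul_div]
          have : s - 1 = r := by omega
          rw [this]
          ring
        have hrecs := (hrec h hh2 hhn).2 s hs1
        rw [show lam * (n:ℝ) + (h:ℝ) - 1 = d from hd_def.symm] at hrecs
        have hprev : |e r (h-1) - (n:ℝ) * mFun a lam r xb| ≤ C' := by
          have := hC' n hn e ⟨hbd, h01, h11, hbig, hrec⟩ (h-1) (by omega) (by omega)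
          rwa [hcast, show ((h:ℝ) - 1)/(n:ℝ) = xb from hxb_def.symm] at this
        have hdrift := drift_approx hlam s hM0 hMd hn (by omega : 1 ≤ h) hhn
        rw [show ((h:ℝ) - 1)/(n:ℝ) = xb from hxb_def.symm] at hdrift
        have hsr : s - 1 = r := by omega
        have key : e s h - (n:ℝ) * mFun a lam s ((h:ℝ)/n)
            = (1 - ((s:ℝ) - a)/d) * (e s (h-1) - (n:ℝ) * mFun a lam s xb)
              + (cCpl a s / d) * (e r (h-1) - (n:ℝ) * mFun a lam r xb)
              - ((n:ℝ) * mFun a lam s ((h:ℝ)/n) - (n:ℝ) * mFun a lam s xb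
                - mDeriv a lam s xb) := by
          rw [hsr] at hrecs
          rw [hrecs, hode]
          field_simp [hd0.ne']
          ring
        rw [key]
        have hc0 : 0 ≤ cCpl a s := by
          rcases eq_or_ne s 1 with h1 | h1
          · rw [h1]; simp [cCpl]; linarith
          · simp only [cCpl, if_neg h1]
            have : (2:ℝ) ≤ (s:ℝ) := by exact_mod_cast (by omega : 2 ≤ s)
            linarith
        have hcs : cCpl a s ≤ (s:ℝ) := by
          rcases eq_or_ne s 1 with h1 | h1
          · rw [h1]; simp [cCpl]; linarith
          · simp only [cCpl, if_neg h1]; linarith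
        have hκ0 : 0 ≤ 1 - ((s:ℝ) - a)/d := by
          have h1 : ((s:ℝ) - a)/d ≤ 1 := by
            rw [div_le_one hd0]; exact hds
          linarith
        have hκ1 : 1 - ((s:ℝ) - a)/d ≤ 1 := by
          have hsa : 0 ≤ (s:ℝ) - a := by
            have : (1:ℝ) ≤ (s:ℝ) := by exact_mod_cast hs1
            linarith
          have : 0 ≤ ((s:ℝ) - a)/d := by positivity
          linarith
        have hcd : cCpl a s / d * |e r (h-1) - (n:ℝ) * mFun a lam r xb| ≤ ((s:ℝ) * C' / lam)/n := by
          have h1 : cCpl a s / d ≤ (s:ℝ) / (lam * n) := div_le_div₀ (by positivity) hcs hln hdl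
          have h2 : cCpl a s / d * |e r (h-1) - (n:ℝ) * mFun a lam r xb|
              ≤ (s:ℝ) / (lam * n) * C' := by
            exact mul_le_mul h1 hprev (abs_nonneg _) (by positivity)
          have h3 : (s:ℝ) / (lam * n) * C' = ((s:ℝ) * C' / lam)/n := by
            field_simp
          linarith [h2, h3.le]
        have hcd0 : 0 ≤ cCpl a s / d := by positivity
        calc |(1 - ((s:ℝ) - a)/d) * (e s (h-1) - (n:ℝ) * mFun a lam s xb)
              + (cCpl a s / d) * (e r (h-1) - (n:ℝ) * mFun a lam r xb)
              - ((n:ℝ) * mFun a lam s ((h:ℝ)/n) - (n:ℝ) * mFun a lam s xb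
                - mDeriv a lam s xb)|
            ≤ |(1 - ((s:ℝ) - a)/d) * (e s (h-1) - (n:ℝ) * mFun a lam s xb)
              + (cCpl a s / d) * (e r (h-1) - (n:ℝ) * mFun a lam r xb)|
              + |(n:ℝ) * mFun a lam s ((h:ℝ)/n) - (n:ℝ) * mFun a lam s xb
                - mDeriv a lam s xb| := abs_sub _ _
          _ ≤ |(1 - ((s:ℝ) - a)/d) * (e s (h-1) - (n:ℝ) * mFun a lam s xb)|
              + |(cCpl a s / d) * (e r (h-1) - (n:ℝ) * mFun a lam r xb)|
              + |(n:ℝ) * mFun a lam s ((h:ℝ)/n) - (n:ℝ) * mFun a lam s xb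
                - mDeriv a lam s xb| := by
              have := abs_add_le ((1 - ((s:ℝ) - a)/d) * (e s (h-1) - (n:ℝ) * mFun a lam s xb))
                ((cCpl a s / d) * (e r (h-1) - (n:ℝ) * mFun a lam r xb))
              linarith
          _ ≤ |e s (h-1) - (n:ℝ) * mFun a lam s xb| + ((s:ℝ) * C' / lam)/n + M/n := by
              have e1 : |(1 - ((s:ℝ) - a)/d) * (e s (h-1) - (n:ℝ) * mFun a lam s xb)|
                  ≤ |e s (h-1) - (n:ℝ) * mFun a lam s xb| := by
                rw [abs_mul, abs_of_nonneg hκ0]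
                have := abs_nonneg (e s (h-1) - (n:ℝ) * mFun a lam s xb)
                nlinarith
              have e2 : |(cCpl a s / d) * (e r (h-1) - (n:ℝ) * mFun a lam r xb)|
                  ≤ ((s:ℝ) * C' / lam)/n := by
                rw [abs_mul, abs_of_nonneg hcd0]
                exact hcd
              linarith [hdrift]
          _ = |e s (h-1) - (n:ℝ) * mFun a lam s xb| + δ/n := by
              rw [hδ_def]; ring
      -- conclude main case
      have := seq_bound (n := n) le_rfl (by positivity : (0:ℝ) ≤ δ / n)
        (by positivity : (0:ℝ) ≤ 1 + L)
        (u := fun k => |e s k - (n:ℝ) * mFun a lam s ((k:ℝ)/n)|)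
        (fun k => abs_nonneg _) (by simpa using hbase) hstep h hh hhn
      rw [one_pow, one_mul] at this
      calc |e s h - (n:ℝ) * mFun a lam s ((h:ℝ)/n)| ≤ (1 + L) + n * (δ/n) := this
        _ = 1 + L + δ := by rw [mul_div_cancel₀]; exact hn0.ne'
        _ ≤ max (1 + L + δ) ((1 + L) * ((s:ℝ)/lam)) := le_max_left _ _
    · -- trivial case: lam * n + 1 < s
      intro h hh hhn
      push_neg at hsize
      have hh1 : (1:ℝ) ≤ (h:ℝ) := by exact_mod_cast hh
      have hhn' : (h:ℝ) ≤ (n:ℝ) := by exact_mod_cast hhn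
      have hmem : (h:ℝ)/n ∈ Set.Icc (0:ℝ) 1 := by
        constructor
        · positivity
        · rw [div_le_one hn0]; exact hhn'
      have h0mem : (0:ℝ) ∈ Set.Icc (0:ℝ) 1 := by constructor <;> norm_num
      have hlip1 := hLip 0 h0mem ((h:ℝ)/n) hmem
      rw [mFun_zero_val hlam s, sub_zero] at hlip1
      have hm : |(n:ℝ) * mFun a lam s ((h:ℝ)/n)| ≤ (n:ℝ) * L := by
        rw [abs_mul, abs_of_pos hn0]
        apply mul_le_mul_of_nonneg_left ?_ hn0.le
        calc |mFun a lam s ((h:ℝ)/n)| ≤ L * |(h:ℝ)/n - 0| := by simpa using hlip1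
          _ ≤ L := by
            rw [sub_zero, abs_of_nonneg (by positivity : (0:ℝ) ≤ (h:ℝ)/n)]
            have : (h:ℝ)/n ≤ 1 := hmem.2
            nlinarith
      have hE : |e s h| ≤ (n:ℝ) := hbd s h hh hhn
      have hnlt : (n:ℝ) ≤ (s:ℝ)/lam := by
        rw [le_div_iff₀ hlam]
        nlinarith
      calc |e s h - (n:ℝ) * mFun a lam s ((h:ℝ)/n)|
          ≤ |e s h| + |(n:ℝ) * mFun a lam s ((h:ℝ)/n)| := abs_sub _ _
        _ ≤ (n:ℝ) + (n:ℝ) * L := by linarith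
        _ = (1 + L) * n := by ring
        _ ≤ (1 + L) * ((s:ℝ)/lam) := by
            apply mul_le_mul_of_nonneg_left hnlt (by positivity)
        _ ≤ max (1 + L + δ) ((1 + L) * ((s:ℝ)/lam)) := le_max_right _ _

variable  {a lam : ℝ} {Ω : Type*} [MeasurableSpace Ω] (A : CRPArray a lam Ω) {n : ℕ}

/-- disjointness: new block vs growth -/
lemma new_growth_disj {h s : ℕ} (hs : 1 ≤ s) {ω : Ω}
    (h1 : IsNewBlock A.K n h ω) (h2 : IsGrowth A.K n s h ω) : False := by
  obtain ⟨hK0, -, -⟩ := h1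
  obtain ⟨-, -, hfix⟩ := h2
  have := hfix 0 (by omega) (by omega)
  omega

/-- disjointness: growth vs growth -/
lemma growth_growth_disj {h s t : ℕ} (hst : s ≠ t) {ω : Ω}
    (h1 : IsGrowth A.K n s h ω) (h2 : IsGrowth A.K n t h ω) : False := by
  obtain ⟨hs1, hs2, hsfix⟩ := h1
  obtain ⟨ht1, ht2, htfix⟩ := h2
  rcases eq_or_ne s (t + 1) with rfl | hst1
  · omega
  · have := htfix s hst hst1
    omega

lemma K_measurable (r h : ℕ) (hh : 1 ≤ h) : Measurable (A.K n r h) := by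
  rw [measurable_iff_comap_le]
  refine le_trans ?_ (A.F_le n h)
  rw [A.F_eq]
  exact le_trans
    (le_biSup (fun k => MeasurableSpace.comap (A.K n r k) ⊤)
      (Finset.mem_Icc.mpr ⟨hh, le_refl h⟩))
    (le_iSup (fun r => ⨆ k ∈ Finset.Icc 1 h, MeasurableSpace.comap (A.K n r k) ⊤) r)

lemma K_measurable' (r h : ℕ) : Measurable (A.K n r h) := by
  rcases Nat.eq_zero_or_pos h with rfl | hh
  · have : A.K n r 0 = fun _ => 0 := funext fun ω => A.K_zero n r ω
    rw [this]; exact measurable_const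
  · exact K_measurable A r h hh

lemma K_measurableR (r h : ℕ) : Measurable (fun ω => (A.K n r h ω : ℝ)) :=
  measurable_from_top.comp (K_measurable' A r h)

lemma measSet_eq_add {f g : Ω → ℤ} (hf : Measurable f) (hg : Measurable g) (c : ℤ) :
    MeasurableSet {ω | f ω = g ω + c} := by
  have : {ω | f ω = g ω + c} = (fun ω => f ω - g ω) ⁻¹' {c} := by
    ext ω
    simp only [Set.mem_setOf_eq, Set.mem_preimage, Set.mem_singleton_iff]
    omega
  rw [this]
  exact (hf.sub hg) (measurableSet_singleton c)

lemma measSet_new (h : ℕ) : MeasurableSet {ω | IsNewBlock A.K n h ω} := by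
  have heq : {ω | IsNewBlock A.K n h ω} =
      ({ω | A.K n 0 h ω = A.K n 0 (h-1) ω + 1} ∩ {ω | A.K n 1 h ω = A.K n 1 (h-1) ω + 1}) ∩
        ⋂ (r : ℕ), ⋂ (_ : 2 ≤ r), {ω | A.K n r h ω = A.K n r (h-1) ω + 0} := by
    ext ω
    simp only [IsNewBlock, Set.mem_inter_iff, Set.mem_iInter, Set.mem_setOf_eq, add_zero]
    tauto
  rw [heq]
  refine MeasurableSet.inter (MeasurableSet.inter ?_ ?_) ?_
  · exact measSet_eq_add (K_measurable' A 0 h) (K_measurable' A 0 (h-1)) 1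
  · exact measSet_eq_add (K_measurable' A 1 h) (K_measurable' A 1 (h-1)) 1
  · exact MeasurableSet.iInter fun r => MeasurableSet.iInter fun _ =>
      measSet_eq_add (K_measurable' A r h) (K_measurable' A r (h-1)) 0

lemma measSet_growth (s h : ℕ) : MeasurableSet {ω | IsGrowth A.K n s h ω} := by
  have heq : {ω | IsGrowth A.K n s h ω} =
      ({ω | A.K n s h ω = A.K n s (h-1) ω + (-1)} ∩
        {ω | A.K n (s+1) h ω = A.K n (s+1) (h-1) ω + 1}) ∩
        ⋂ (r : ℕ), ⋂ (_ : r ≠ s), ⋂ (_ : r ≠ s + 1),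
          {ω | A.K n r h ω = A.K n r (h-1) ω + 0} := by
    ext ω
    simp only [IsGrowth, Set.mem_inter_iff, Set.mem_iInter, Set.mem_setOf_eq, add_zero]
    constructor
    · rintro ⟨h1, h2, h3⟩
      exact ⟨⟨by omega, h2⟩, fun r hr hr' => h3 r hr hr'⟩
    · rintro ⟨⟨h1, h2⟩, h3⟩
      exact ⟨by omega, h2, fun r hr hr' => h3 r hr hr'⟩
  rw [heq]
  refine MeasurableSet.inter (MeasurableSet.inter ?_ ?_) ?_
  · exact measSet_eq_add (K_measurable' A s h) (K_measurable' A s (h-1)) (-1)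
  · exact measSet_eq_add (K_measurable' A (s+1) h) (K_measurable' A (s+1) (h-1)) 1
  · exact MeasurableSet.iInter fun r => MeasurableSet.iInter fun _ =>
      MeasurableSet.iInter fun _ =>
        measSet_eq_add (K_measurable' A r h) (K_measurable' A r (h-1)) 0

/-- a.s. bound `|K n r h| ≤ h`. -/
lemma K_bound (hn : 1 ≤ n) : ∀ h, 1 ≤ h → h ≤ n →
    ∀ᵐ ω ∂A.P, ∀ r, |A.K n r h ω| ≤ (h : ℤ) := by
  intro h
  induction h with
  | zero => intro h0; omega
  | succ m ih =>
    intro _ hle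
    rcases Nat.eq_zero_or_pos m with rfl | hm
    · refine Filter.Eventually.of_forall fun ω r => ?_
      match r with
      | 0 => rw [A.K_init_blocks n ω]; norm_num
      | 1 => rw [A.K_init_one n ω]; norm_num
      | (r+2) => rw [A.K_init_big n (r+2) (by omega) ω]; norm_num
    · have hstep := A.step n hn (m+1) (by omega) hle
      have hih := ih hm (by omega)
      filter_upwards [hstep, hih] with ω hω hbd
      intro r
      have hdiff : |A.K n r (m+1) ω - A.K n r m ω| ≤ 1 := by
        rcases hω with hnew | ⟨s, hs1, hs2, hg⟩
        · obtain ⟨h0, h1, hbig⟩ := hnew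
          simp only [Nat.add_sub_cancel] at h0 h1 hbig
          match r with
          | 0 => rw [h0]; ring_nf; norm_num
          | 1 => rw [h1]; ring_nf; norm_num
          | (r+2) => rw [hbig (r+2) (by omega)]; ring_nf; norm_num
        · obtain ⟨hg1, hg2, hgfix⟩ := hg
          simp only [Nat.add_sub_cancel] at hg1 hg2 hgfix
          rcases eq_or_ne r s with rfl | hrs
          · rw [hg1]; ring_nf; norm_num
          · rcases eq_or_ne r (s+1) with rfl | hrs1
            · rw [hg2]; ring_nf; norm_num
            · rw [hgfix r hrs hrs1]; ring_nf; norm_num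
      have htri := abs_add_le (A.K n r (m+1) ω - A.K n r m ω) (A.K n r m ω)
      rw [sub_add_cancel] at htri
      have := hbd r
      push_cast
      omega

lemma K_integrable (hn : 1 ≤ n) (r : ℕ) {h : ℕ} (hh : 1 ≤ h) (hhn : h ≤ n) :
    Integrable (fun ω => (A.K n r h ω : ℝ)) A.P := by
  haveI := A.isProb
  refine ⟨(K_measurableR A r h).aestronglyMeasurable, ?_⟩
  apply HasFiniteIntegral.of_bounded (C := (h:ℝ))
  filter_upwards [K_bound A hn h hh hhn] with ω hω
  have := hω r
  rw [Real.norm_eq_abs, ← Int.cast_abs]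
  exact_mod_cast this

/-- vanishing of large block counts -/
lemma K_vanish (hn : 1 ≤ n) : ∀ h, 1 ≤ h → h ≤ n →
    ∀ᵐ ω ∂A.P, ∀ r, h + 1 ≤ r → A.K n r h ω = 0 := by
  intro h
  induction h with
  | zero => intro h0; omega
  | succ m ih =>
    intro _ hle
    rcases Nat.eq_zero_or_pos m with rfl | hm
    · exact Filter.Eventually.of_forall fun ω r hr => A.K_init_big n r (by omega) ω
    · have hstep := A.step n hn (m+1) (by omega) hle
      have hih := ih hm (by omega)
      filter_upwards [hstep, hih] with ω hω hvan
      intro r hr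
      rcases hω with hnew | ⟨s, hs1, hs2, hg⟩
      · obtain ⟨-, -, hbig⟩ := hnew
        simp only [Nat.add_sub_cancel] at hbig
        rw [hbig r (by omega)]
        exact hvan r (by omega)
      · obtain ⟨-, -, hgfix⟩ := hg
        simp only [Nat.add_sub_cancel] at hgfix
        rw [hgfix r (by omega) (by omega)]
        exact hvan r (by omega)


lemma ind_new_mem {h : ℕ} {ω : Ω} (hm : IsNewBlock A.K n h ω) :
    Set.indicator {ω | IsNewBlock A.K n h ω} (fun _ => (1:ℝ)) ω = 1 := by
  have h2 : ω ∈ {ω | IsNewBlock A.K n h ω} := hm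
  exact Set.indicator_of_mem h2 _

lemma ind_new_notmem {h : ℕ} {ω : Ω} (hm : ¬ IsNewBlock A.K n h ω) :
    Set.indicator {ω | IsNewBlock A.K n h ω} (fun _ => (1:ℝ)) ω = 0 := by
  have h2 : ω ∉ {ω | IsNewBlock A.K n h ω} := hm
  exact Set.indicator_of_notMem h2 _

lemma ind_growth_mem {s h : ℕ} {ω : Ω} (hm : IsGrowth A.K n s h ω) :
    Set.indicator {ω | IsGrowth A.K n s h ω} (fun _ => (1:ℝ)) ω = 1 := by
  have h2 : ω ∈ {ω | IsGrowth A.K n s h ω} := hm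
  exact Set.indicator_of_mem h2 _

lemma ind_growth_notmem {s h : ℕ} {ω : Ω} (hm : ¬ IsGrowth A.K n s h ω) :
    Set.indicator {ω | IsGrowth A.K n s h ω} (fun _ => (1:ℝ)) ω = 0 := by
  have h2 : ω ∉ {ω | IsGrowth A.K n s h ω} := hm
  exact Set.indicator_of_notMem h2 _

/-- integral of the new-block indicator. -/
lemma int_new (hn : 1 ≤ n) {h : ℕ} (hh2 : 2 ≤ h) (hhn : h ≤ n) :
    ∫ ω, Set.indicator {ω | IsNewBlock A.K n h ω} (fun _ => (1:ℝ)) ω ∂A.P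
      = (a * (∫ ω, (A.K n 0 (h-1) ω : ℝ) ∂A.P) + lam * n) / (lam * n + (h:ℝ) - 1) := by
  haveI := A.isProb
  have h1 := integral_condExp (μ := A.P) (hm := A.F_le n (h-1))
    (f := Set.indicator {ω | IsNewBlock A.K n h ω} (fun _ => (1:ℝ)))
  have h2 := integral_congr_ae (A.condNew n hn h hh2 hhn)
  rw [← h1, h2, integral_div]
  congr 1
  rw [integral_add ((K_integrable A hn 0 (by omega) (by omega)).const_mul a)
    (integrable_const _), integral_const_mul _ _, integral_const]
  simp

/-- integral of a growth indicator, small sizes. -/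
lemma int_growth (hn : 1 ≤ n) {h s : ℕ} (hh2 : 2 ≤ h) (hhn : h ≤ n)
    (hs1 : 1 ≤ s) (hs2 : s ≤ h - 1) :
    ∫ ω, Set.indicator {ω | IsGrowth A.K n s h ω} (fun _ => (1:ℝ)) ω ∂A.P
      = ((s:ℝ) - a) * (∫ ω, (A.K n s (h-1) ω : ℝ) ∂A.P) / (lam * n + (h:ℝ) - 1) := by
  haveI := A.isProb
  have h1 := integral_condExp (μ := A.P) (hm := A.F_le n (h-1))
    (f := Set.indicator {ω | IsGrowth A.K n s h ω} (fun _ => (1:ℝ)))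
  have h2 := integral_congr_ae (A.condGrowth n hn h hh2 hhn s hs1 hs2)
  rw [← h1, h2, integral_div, integral_const_mul _ _]

/-- integral of a growth indicator, large sizes: zero. -/
lemma int_growth_null (hn : 1 ≤ n) {h s : ℕ} (hh2 : 2 ≤ h) (hhn : h ≤ n) (hs : h ≤ s) :
    ∫ ω, Set.indicator {ω | IsGrowth A.K n s h ω} (fun _ => (1:ℝ)) ω ∂A.P = 0 := by
  haveI := A.isProb
  have hzero : Set.indicator {ω | IsGrowth A.K n s h ω} (fun _ => (1:ℝ)) =ᵐ[A.P] 0 := by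
    filter_upwards [A.step n hn h hh2 hhn] with ω hω
    have hnot : ω ∉ {ω | IsGrowth A.K n s h ω} := by
      intro hmem
      rcases hω with hnew | ⟨t, ht1, ht2, hg⟩
      · exact new_growth_disj A (by omega) hnew hmem
      · exact growth_growth_disj A (by omega : s ≠ t) hmem hg
    simp [Set.indicator_of_notMem hnot]
  rw [integral_congr_ae hzero]
  simp

/-- vanishing of the mean for large sizes. -/
lemma int_vanish (hn : 1 ≤ n) {h s : ℕ} (hh1 : 1 ≤ h) (hhn : h ≤ n) (hs : h + 1 ≤ s) :
    ∫ ω, (A.K n s h ω : ℝ) ∂A.P = 0 := by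
  haveI := A.isProb
  have : (fun ω => (A.K n s h ω : ℝ)) =ᵐ[A.P] 0 := by
    filter_upwards [K_vanish A hn h hh1 hhn] with ω hω
    simp [hω s hs]
  rw [integral_congr_ae this]
  simp

/-- recursion for the number of blocks. -/
lemma rec0 (hn : 1 ≤ n) {h : ℕ} (hh2 : 2 ≤ h) (hhn : h ≤ n) :
    ∫ ω, (A.K n 0 h ω : ℝ) ∂A.P = (∫ ω, (A.K n 0 (h-1) ω : ℝ) ∂A.P)
      + (a * (∫ ω, (A.K n 0 (h-1) ω : ℝ) ∂A.P) + lam * n) / (lam * n + (h:ℝ) - 1) := by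
  haveI := A.isProb
  have hae : (fun ω => (A.K n 0 h ω : ℝ)) =ᵐ[A.P]
      (fun ω => (A.K n 0 (h-1) ω : ℝ)
        + Set.indicator {ω | IsNewBlock A.K n h ω} (fun _ => (1:ℝ)) ω) := by
    filter_upwards [A.step n hn h hh2 hhn] with ω hω
    rcases hω with hnew | ⟨s, hs1, hs2, hg⟩
    · rw [ind_new_mem A hnew, hnew.1]
      push_cast; ring
    · rw [ind_new_notmem A (fun hmem => new_growth_disj A hs1 hmem hg),
        hg.2.2 0 (by omega) (by omega)]
      ring
  rw [integral_congr_ae hae,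
    integral_add (K_integrable A hn 0 (by omega) (by omega))
      ((integrable_const (1:ℝ)).indicator (measSet_new A h)),
    int_new A hn hh2 hhn]

/-- recursion for singleton blocks. -/
lemma rec1 (hn : 1 ≤ n) {h : ℕ} (hh2 : 2 ≤ h) (hhn : h ≤ n) :
    ∫ ω, (A.K n 1 h ω : ℝ) ∂A.P = (∫ ω, (A.K n 1 (h-1) ω : ℝ) ∂A.P)
      + (a * (∫ ω, (A.K n 0 (h-1) ω : ℝ) ∂A.P) + lam * n) / (lam * n + (h:ℝ) - 1)
      - ((1:ℝ) - a) * (∫ ω, (A.K n 1 (h-1) ω : ℝ) ∂A.P) / (lam * n + (h:ℝ) - 1) := by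
  haveI := A.isProb
  have hae : (fun ω => (A.K n 1 h ω : ℝ)) =ᵐ[A.P]
      (fun ω => (A.K n 1 (h-1) ω : ℝ)
        + Set.indicator {ω | IsNewBlock A.K n h ω} (fun _ => (1:ℝ)) ω
        - Set.indicator {ω | IsGrowth A.K n 1 h ω} (fun _ => (1:ℝ)) ω) := by
    filter_upwards [A.step n hn h hh2 hhn] with ω hω
    rcases hω with hnew | ⟨s, hs1, hs2, hg⟩
    · rw [ind_new_mem A hnew,
        ind_growth_notmem A (fun hmem => new_growth_disj A (le_refl 1) hnew hmem),
        hnew.2.1]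
      push_cast; ring
    · rw [ind_new_notmem A (fun hmem => new_growth_disj A hs1 hmem hg)]
      rcases eq_or_ne s 1 with rfl | hs
      · rw [ind_growth_mem A hg, hg.1]
        push_cast; ring
      · rw [ind_growth_notmem A
          (fun hmem => growth_growth_disj A (Ne.symm hs) hmem hg),
          hg.2.2 1 (Ne.symm hs) (by omega)]
        ring
  rw [integral_congr_ae hae]
  have hiN : Integrable (fun ω => Set.indicator {ω | IsNewBlock A.K n h ω}
      (fun _ => (1:ℝ)) ω) A.P := (integrable_const (1:ℝ)).indicator (measSet_new A h)
  have hiG : Integrable (fun ω => Set.indicator {ω | IsGrowth A.K n 1 h ω}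
      (fun _ => (1:ℝ)) ω) A.P := (integrable_const (1:ℝ)).indicator (measSet_growth A 1 h)
  have hiK := K_integrable A hn 1 (by omega : 1 ≤ h - 1) (by omega : h - 1 ≤ n)
  have hi1 : Integrable (fun ω => (A.K n 1 (h-1) ω : ℝ)
      + Set.indicator {ω | IsNewBlock A.K n h ω} (fun _ => (1:ℝ)) ω) A.P := hiK.add hiN
  rw [integral_sub hi1 hiG, integral_add hiK hiN,
    int_new A hn hh2 hhn, int_growth A hn hh2 hhn le_rfl (by omega)]
  norm_num

/-- recursion for blocks of size `r ≥ 2`. -/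
lemma recR (hn : 1 ≤ n) {r h : ℕ} (hr : 2 ≤ r) (hh2 : 2 ≤ h) (hhn : h ≤ n) :
    ∫ ω, (A.K n r h ω : ℝ) ∂A.P = (∫ ω, (A.K n r (h-1) ω : ℝ) ∂A.P)
      + ((r:ℝ) - 1 - a) * (∫ ω, (A.K n (r-1) (h-1) ω : ℝ) ∂A.P) / (lam * n + (h:ℝ) - 1)
      - ((r:ℝ) - a) * (∫ ω, (A.K n r (h-1) ω : ℝ) ∂A.P) / (lam * n + (h:ℝ) - 1) := by
  haveI := A.isProb
  have hae : (fun ω => (A.K n r h ω : ℝ)) =ᵐ[A.P]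
      (fun ω => (A.K n r (h-1) ω : ℝ)
        + Set.indicator {ω | IsGrowth A.K n (r-1) h ω} (fun _ => (1:ℝ)) ω
        - Set.indicator {ω | IsGrowth A.K n r h ω} (fun _ => (1:ℝ)) ω) := by
    filter_upwards [A.step n hn h hh2 hhn] with ω hω
    rcases hω with hnew | ⟨s, hs1, hs2, hg⟩
    · rw [ind_growth_notmem A (fun hmem => new_growth_disj A (by omega) hnew hmem),
        ind_growth_notmem A (fun hmem => new_growth_disj A (by omega) hnew hmem),
        hnew.2.2 r hr]
      ring
    · rcases eq_or_ne s (r-1) with hsr1 | hsr1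
      · rw [hsr1] at hg
        rw [ind_growth_mem A hg,
          ind_growth_notmem A
            (fun hmem => growth_growth_disj A (by omega : r ≠ r - 1) hmem hg)]
        have h5 := hg.2.1
        rw [show (r-1) + 1 = r by omega] at h5
        rw [h5]
        push_cast; ring
      · rcases eq_or_ne s r with hsr | hsr
        · rw [hsr] at hg
          rw [ind_growth_mem A hg,
            ind_growth_notmem A
              (fun hmem => growth_growth_disj A (by omega : r - 1 ≠ r) hmem hg),
            hg.1]
          push_cast; ring
        · rw [ind_growth_notmem A
            (fun hmem => growth_growth_disj A (by omega : r - 1 ≠ s) hmem hg),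
            ind_growth_notmem A
              (fun hmem => growth_growth_disj A (by omega : r ≠ s) hmem hg),
            hg.2.2 r (by omega) (by omega)]
          ring
  rw [integral_congr_ae hae]
  have hiG1 : Integrable (fun ω => Set.indicator {ω | IsGrowth A.K n (r-1) h ω}
      (fun _ => (1:ℝ)) ω) A.P := (integrable_const (1:ℝ)).indicator (measSet_growth A (r-1) h)
  have hiG2 : Integrable (fun ω => Set.indicator {ω | IsGrowth A.K n r h ω}
      (fun _ => (1:ℝ)) ω) A.P := (integrable_const (1:ℝ)).indicator (measSet_growth A r h)
  have hiK := K_integrable A hn r (by omega : 1 ≤ h - 1) (by omega : h - 1 ≤ n)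
  have hi1 : Integrable (fun ω => (A.K n r (h-1) ω : ℝ)
      + Set.indicator {ω | IsGrowth A.K n (r-1) h ω} (fun _ => (1:ℝ)) ω) A.P := hiK.add hiG1
  rw [integral_sub hi1 hiG2, integral_add hiK hiG1]
  have hinc : ∫ ω, Set.indicator {ω | IsGrowth A.K n (r-1) h ω} (fun _ => (1:ℝ)) ω ∂A.P
      = ((r:ℝ) - 1 - a) * (∫ ω, (A.K n (r-1) (h-1) ω : ℝ) ∂A.P) / (lam * n + (h:ℝ) - 1) := by
    by_cases hc : r - 1 ≤ h - 1
    · rw [int_growth A hn hh2 hhn (by omega) hc,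
        show ((r-1:ℕ):ℝ) = (r:ℝ) - 1 from by
          push_cast [Nat.cast_sub (by omega : 1 ≤ r)]; ring]
    · rw [int_growth_null A hn hh2 hhn (by omega),
        int_vanish A hn (by omega : 1 ≤ h - 1) (by omega) (by omega : (h-1) + 1 ≤ r - 1)]
      simp
  have hdec : ∫ ω, Set.indicator {ω | IsGrowth A.K n r h ω} (fun _ => (1:ℝ)) ω ∂A.P
      = ((r:ℝ) - a) * (∫ ω, (A.K n r (h-1) ω : ℝ) ∂A.P) / (lam * n + (h:ℝ) - 1) := by
    by_cases hc : r ≤ h - 1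
    · rw [int_growth A hn hh2 hhn (by omega) hc]
    · rw [int_growth_null A hn hh2 hhn (by omega),
        int_vanish A hn (by omega : 1 ≤ h - 1) (by omega) (by omega : (h-1) + 1 ≤ r)]
      simp
  rw [hinc, hdec]

/-- initial values of the means. -/
lemma int_init0 : ∫ ω, (A.K n 0 1 ω : ℝ) ∂A.P = 1 := by
  haveI := A.isProb
  have : (fun ω => (A.K n 0 1 ω : ℝ)) = fun _ => (1:ℝ) := by
    funext ω; rw [A.K_init_blocks n ω]; norm_num
  rw [this]; simp

lemma int_init1 : ∫ ω, (A.K n 1 1 ω : ℝ) ∂A.P = 1 := by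
  haveI := A.isProb
  have : (fun ω => (A.K n 1 1 ω : ℝ)) = fun _ => (1:ℝ) := by
    funext ω; rw [A.K_init_one n ω]; norm_num
  rw [this]; simp

lemma int_init_big {r : ℕ} (hr : 2 ≤ r) : ∫ ω, (A.K n r 1 ω : ℝ) ∂A.P = 0 := by
  haveI := A.isProb
  have : (fun ω => (A.K n r 1 ω : ℝ)) = fun _ => (0:ℝ) := by
    funext ω; rw [A.K_init_big n r hr ω]; norm_num
  rw [this]; simp

lemma int_bound (hn : 1 ≤ n) (r : ℕ) {h : ℕ} (hh : 1 ≤ h) (hhn : h ≤ n) :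
    |∫ ω, (A.K n r h ω : ℝ) ∂A.P| ≤ (n:ℝ) := by
  haveI := A.isProb
  have hb : ∀ᵐ ω ∂A.P, ‖(A.K n r h ω : ℝ)‖ ≤ (n:ℝ) := by
    filter_upwards [K_bound A hn h hh hhn] with ω hω
    have h1 := hω r
    rw [Real.norm_eq_abs, ← Int.cast_abs]
    have : ((h:ℤ):ℝ) ≤ (n:ℝ) := by exact_mod_cast hhn
    have h2 : ((|A.K n r h ω|:ℤ):ℝ) ≤ ((h:ℤ):ℝ) := by exact_mod_cast h1
    linarith
  have := norm_integral_le_of_norm_le_const hb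
  rw [Real.norm_eq_abs] at this
  simpa using this

/-- the means satisfy the deterministic recursion hypothesis. -/
lemma recHyp_holds (hn : 1 ≤ n) :
    RecHyp a lam n (fun r h => ∫ ω, (A.K n r h ω : ℝ) ∂A.P) := by
  refine ⟨fun r h hh hhn => int_bound A hn r hh hhn, int_init0 A, int_init1 A,
    fun r hr => int_init_big A hr, fun h hh2 hhn => ⟨rec0 A hn hh2 hhn, ?_⟩⟩
  intro r hr
  rcases eq_or_ne r 1 with rfl | hr1
  · have h1 := rec1 A hn hh2 hhn
    simp only [cCpl, eq_self_iff_true, if_true, Nat.cast_one, show (1:ℕ) - 1 = 0 from rfl]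
    linarith [h1]
  · have hr2 : 2 ≤ r := by omega
    have h1 := recR A hn hr2 hh2 hhn
    simp only [cCpl, if_neg hr1, zero_mul, add_zero]
    linarith [h1]


end EPaux

/-- `E[K^{(n)}_{r,n}] = n·𝔪_r + O(1)`: the supremum over `n ≥ 1` of
`|E[K^{(n)}_{r,n}] − n·𝔪_r|` is finite, for every fixed `r ≥ 0`. -/
theorem ewensPitman_mean_linear_growth
    (a lam : ℝ) (ha0 : 0 ≤ a) (ha1 : a < 1) (hlam : 0 < lam)
    {Ω : Type*} [MeasurableSpace Ω] (A : CRPArray a lam Ω) (r : ℕ) :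
    ∃ C : ℝ, ∀ n : ℕ, 1 ≤ n →
      |(∫ ω, ((A.K n r n ω : ℝ)) ∂A.P) - (n : ℝ) * mFun a lam r 1| ≤ C := by
  obtain ⟨C, hC0, hC⟩ := EPaux.detAll ha0 ha1 hlam r
  refine ⟨C, fun n hn => ?_⟩
  have hn0 : ((n:ℝ)) ≠ 0 := Nat.cast_ne_zero.mpr (by omega)
  have h1 := hC n hn _ (EPaux.recHyp_holds A hn) n hn le_rfl
  rwa [div_self hn0] at h1

end
end

section
/- Uniform asymptotics of the deterministic rescaling factors: for α ∈ [0,1), λ > 0 and a fixed integer r ≥ 0, there exist a constant C and an integer N (such that λN + 1 − r + α > 0) with sup over x ∈ [0,1] of |a⁽ⁿ⁾_{r,⌊nx⌋+1} − ((λ+x)/λ)^{r−α}| ≤ C/n for all n ≥ N; in particular a⁽ⁿ⁾_{r,⌊nx⌋+1} = ((λ+x)/λ)^{r−α} + O(1/n) uniformly in x ∈ [0,1]. -/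
open MeasureTheory ProbabilityTheory Filter Set Topology

noncomputable section

private lemma log_taylor_bound' {y : ℝ} (hy : |y| ≤ 1/2) : |y + Real.log (1 - y)| ≤ 2 * y ^ 2 := by
  have h1 : |y| < 1 := lt_of_le_of_lt hy (by norm_num)
  have h := Real.abs_log_sub_add_sum_range_le h1 1
  simp [Finset.sum_range_one] at h
  calc |y + Real.log (1 - y)| ≤ y ^ 2 / (1 - |y|) := h
    _ ≤ 2 * y ^ 2 := by
        rw [div_le_iff₀ (by linarith : (0:ℝ) < 1 - |y|)]
        nlinarith [sq_abs y, abs_nonneg y, sq_nonneg y]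

private lemma log_ratio_bound' {ρ t : ℝ} (ht : 2 ≤ t) (htρ : 2 * |ρ| ≤ t) :
    |Real.log t - Real.log (t - ρ) - ρ / t| ≤ 2 * ρ ^ 2 / t ^ 2 := by
  have ht0 : (0:ℝ) < t := by linarith
  have hρ : ρ ≤ |ρ| := le_abs_self ρ
  have htρ0 : 0 < t - ρ := by linarith [abs_nonneg ρ]
  have hy : |ρ / t| ≤ 1 / 2 := by
    rw [abs_div, abs_of_pos ht0, div_le_iff₀ ht0]; linarith
  have key : Real.log t - Real.log (t - ρ) = -Real.log (1 - ρ / t) := by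
    have h1 : 1 - ρ / t = (t - ρ) / t := by field_simp
    rw [h1, Real.log_div htρ0.ne' ht0.ne']; ring
  have := log_taylor_bound' hy
  calc |Real.log t - Real.log (t - ρ) - ρ / t|
      = |ρ / t + Real.log (1 - ρ / t)| := by rw [key]; rw [abs_sub_comm]; ring_nf
    _ ≤ 2 * (ρ / t) ^ 2 := this
    _ = 2 * ρ ^ 2 / t ^ 2 := by rw [div_pow]; ring

set_option maxHeartbeats 2000000

/-- uniform asymptotics of the deterministic rescaling factors:
`a^{(n)}_{r,⌊nx⌋+1} = ((λ+x)/λ)^{r−α} + O(1/n)` uniformly in `x ∈ [0,1]`. -/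
theorem aCoef_uniform_asymptotics
    (a lam : ℝ) (ha0 : 0 ≤ a) (ha1 : a < 1) (hlam : 0 < lam) (r : ℕ) :
    ∃ C : ℝ, ∃ N : ℕ, lam * (N : ℝ) + 1 - (r : ℝ) + a > 0 ∧
      ∀ n : ℕ, N ≤ n → ∀ x ∈ Set.Icc (0:ℝ) 1,
        |aCoef a lam n r (⌊(n : ℝ) * x⌋₊ + 1) - ((lam + x) / lam) ^ ((r : ℝ) - a)| ≤
          C / (n : ℝ) := by
  have hlamne : lam ≠ 0 := hlam.ne'
  set ρ : ℝ := (r : ℝ) - a with hρdef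
  set C₂ : ℝ := (2 * ρ ^ 2 + 2 * |ρ|) / lam ^ 2 + |ρ| / lam with hC2
  have habs : 0 ≤ |ρ| := abs_nonneg ρ
  have hρle : ρ ≤ |ρ| := le_abs_self ρ
  have hC2nonneg : 0 ≤ C₂ := by positivity
  set B : ℝ := |ρ| * Real.log ((lam + 1) / lam) with hBdef
  set N : ℕ := ⌈max ((2 * |ρ| + 2) / lam) C₂⌉₊ + 1 with hNdef
  have hNceil : max ((2 * |ρ| + 2) / lam) C₂ ≤ (N : ℝ) := by
    push_cast [hNdef]
    linarith [Nat.le_ceil (max ((2 * |ρ| + 2) / lam) C₂)]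
  have hNlam : 2 * |ρ| + 2 ≤ lam * N := by
    have h1 : (2 * |ρ| + 2) / lam ≤ (N : ℝ) := le_trans (le_max_left _ _) hNceil
    rw [div_le_iff₀ hlam] at h1; linarith
  have hNC : C₂ ≤ (N : ℝ) := le_trans (le_max_right _ _) hNceil
  have hN1 : 1 ≤ N := Nat.le_add_left 1 _
  clear_value C₂ B N
  refine ⟨2 * Real.exp B * C₂, N, by linarith, ?_⟩
  intro n hn x hx
  obtain ⟨hx0, hx1⟩ := hx
  have hn1 : 1 ≤ n := le_trans hN1 hn
  have hnR : (1:ℝ) ≤ (n : ℝ) := by exact_mod_cast hn1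
  have hn0 : (0:ℝ) < (n : ℝ) := by linarith
  have hnne : (n:ℝ) ≠ 0 := hn0.ne'
  have hNn : (N : ℝ) ≤ (n : ℝ) := by exact_mod_cast hn
  have hlamn : 2 * |ρ| + 2 ≤ lam * n := by nlinarith
  have hlamn0 : 0 < lam * n := by linarith
  set m : ℕ := ⌊(n : ℝ) * x⌋₊ with hmdef
  have hm0 : (0:ℝ) ≤ (m:ℝ) := Nat.cast_nonneg m
  have hm_le : (m : ℝ) ≤ (n : ℝ) * x := Nat.floor_le (by positivity)
  have hm_lt : (n : ℝ) * x < (m : ℝ) + 1 := Nat.lt_floor_add_one _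
  have hmn : (m : ℝ) ≤ (n : ℝ) := by nlinarith
  clear_value m
  set T : ℕ → ℝ := fun j => lam * n + (j : ℝ) with hTdef
  have hTval : ∀ j : ℕ, T j = lam * n + (j : ℝ) := fun j => by rw [hTdef]
  clear_value T
  have hT0 : ∀ j : ℕ, lam * n ≤ T j := fun j => by
    have := Nat.cast_nonneg (α := ℝ) j; rw [hTval]; linarith
  have hT2 : ∀ j : ℕ, 2 ≤ T j := fun j => by have := hT0 j; linarith
  have hTρ : ∀ j : ℕ, 2 * |ρ| ≤ T j := fun j => by have := hT0 j; linarith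
  have hTpos : ∀ j : ℕ, 0 < T j := fun j => by have := hT2 j; linarith
  have hTρpos : ∀ j : ℕ, 0 < T j - ρ := fun j => by
    have h1 := hTρ j; have h2 := hT2 j; linarith
  set L : ℝ := ∑ k ∈ Finset.range m, (Real.log (T (k+1)) - Real.log (T (k+1) - ρ)) with hLdef
  clear_value L
  have haCoef : aCoef a lam n r (m + 1) = Real.exp L := by
    rw [hLdef, Real.exp_sum]
    unfold aCoef
    simp only [Nat.add_sub_cancel]
    refine Finset.prod_congr rfl fun k _ => ?_
    rw [Real.exp_sub, Real.exp_log (hTpos (k+1)), Real.exp_log (hTρpos (k+1)), hTval, hρdef]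
    push_cast
    ring
  set S1 : ℝ := ∑ k ∈ Finset.range m, ρ / T (k+1) with hS1def
  clear_value S1
  have h1 : |L - S1| ≤ 2 * ρ ^ 2 / (lam ^ 2 * n) := by
    rw [hLdef, hS1def, ← Finset.sum_sub_distrib]
    calc |∑ k ∈ Finset.range m, (Real.log (T (k+1)) - Real.log (T (k+1) - ρ) - ρ / T (k+1))|
        ≤ ∑ k ∈ Finset.range m, |Real.log (T (k+1)) - Real.log (T (k+1) - ρ) - ρ / T (k+1)| :=
          Finset.abs_sum_le_sum_abs _ _
      _ ≤ ∑ _k ∈ Finset.range m, 2 * ρ ^ 2 / (lam * n) ^ 2 := by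
          refine Finset.sum_le_sum fun k _ => ?_
          refine le_trans (log_ratio_bound' (hT2 (k+1)) (hTρ (k+1))) ?_
          gcongr
          exact hT0 (k+1)
      _ = (m : ℝ) * (2 * ρ ^ 2 / (lam * n) ^ 2) := by
          rw [Finset.sum_const, Finset.card_range, nsmul_eq_mul]
      _ ≤ (n : ℝ) * (2 * ρ ^ 2 / (lam * n) ^ 2) := by gcongr
      _ = 2 * ρ ^ 2 / (lam ^ 2 * n) := by field_simp
  set S2 : ℝ := Real.log (T m) - Real.log (T 0) with hS2def
  clear_value S2
  have htele : S2 = ∑ k ∈ Finset.range m, (Real.log (T (k+1)) - Real.log (T k)) := by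
    rw [hS2def]; exact (Finset.sum_range_sub (fun k => Real.log (T k)) m).symm
  have h2 : |S1 - ρ * S2| ≤ 2 * |ρ| / (lam ^ 2 * n) := by
    rw [hS1def, htele, Finset.mul_sum, ← Finset.sum_sub_distrib]
    calc |∑ k ∈ Finset.range m, (ρ / T (k+1) - ρ * (Real.log (T (k+1)) - Real.log (T k)))|
        ≤ ∑ k ∈ Finset.range m, |ρ / T (k+1) - ρ * (Real.log (T (k+1)) - Real.log (T k))| :=
          Finset.abs_sum_le_sum_abs _ _
      _ ≤ ∑ _k ∈ Finset.range m, |ρ| * (2 / (lam * n) ^ 2) := by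
          refine Finset.sum_le_sum fun k _ => ?_
          have hTk : T k = T (k+1) - 1 := by rw [hTval, hTval]; push_cast; ring
          have heq : ρ / T (k+1) - ρ * (Real.log (T (k+1)) - Real.log (T k))
              = -ρ * (Real.log (T (k+1)) - Real.log (T (k+1) - 1) - 1 / T (k+1)) := by
            rw [hTk]; ring
          rw [heq, abs_mul, abs_neg]
          have hb := log_ratio_bound' (ρ := (1:ℝ)) (hT2 (k+1))
            (by rw [abs_one]; linarith [hT0 (k+1)])
          have hb2 : |Real.log (T (k+1)) - Real.log (T (k+1) - 1) - 1 / T (k+1)|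
              ≤ 2 / (lam * n) ^ 2 := by
            refine le_trans hb ?_
            rw [one_pow, mul_one]
            gcongr
            exact hT0 (k+1)
          exact mul_le_mul_of_nonneg_left hb2 habs
      _ = (m:ℝ) * (|ρ| * (2 / (lam * n) ^ 2)) := by
          rw [Finset.sum_const, Finset.card_range, nsmul_eq_mul]
      _ ≤ (n:ℝ) * (|ρ| * (2 / (lam * n) ^ 2)) := by gcongr
      _ = 2 * |ρ| / (lam ^ 2 * n) := by field_simp
  set S3 : ℝ := ρ * Real.log ((lam + x) / lam) with hS3def
  clear_value S3
  have hlx : (0:ℝ) < lam + x := by linarith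
  have h3 : |ρ * S2 - S3| ≤ |ρ| / (lam * n) := by
    set u : ℝ := lam * n + (m:ℝ) with hudef
    set v : ℝ := (lam + x) * n with hvdef
    clear_value u v
    have hu0 : 0 < u := by rw [hudef]; linarith
    have hv0 : 0 < v := by rw [hvdef]; positivity
    have huv : u ≤ v := by rw [hudef, hvdef]; linarith
    have hvu : v ≤ u + 1 := by rw [hudef, hvdef]; linarith
    have hlogmono : Real.log u ≤ Real.log v := Real.log_le_log hu0 huv
    have hlogdiff : Real.log v - Real.log u ≤ 1 / (lam * n) := by
      have h4 : Real.log v - Real.log u = Real.log (v / u) :=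
        (Real.log_div hv0.ne' hu0.ne').symm
      have h5 : Real.log (v / u) ≤ v / u - 1 := Real.log_le_sub_one_of_pos (by positivity)
      have h6 : v / u - 1 ≤ 1 / (lam * n) := by
        have he : v / u - 1 = (v - u) / u := by field_simp
        rw [he, div_le_div_iff₀ hu0 hlamn0]
        nlinarith
      rw [h4]; linarith
    have hTm : T m = u := by rw [hTval, hudef]
    have hT00 : T 0 = lam * n := by rw [hTval]; norm_num
    have hS2u : S2 = Real.log u - Real.log (lam * n) := by rw [hS2def, hTm, hT00]
    have hSv : Real.log ((lam + x) / lam) = Real.log v - Real.log (lam * n) := by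
      rw [hvdef, Real.log_mul hlx.ne' hnne, Real.log_mul hlamne hnne,
        Real.log_div hlx.ne' hlamne]
      ring
    have heq : ρ * S2 - S3 = ρ * (Real.log u - Real.log v) := by
      rw [hS2u, hS3def, hSv]; ring
    rw [heq, abs_mul]
    have habs2 : |Real.log u - Real.log v| ≤ 1 / (lam * n) := by
      rw [abs_sub_comm, abs_of_nonneg (by linarith)]; linarith
    calc |ρ| * |Real.log u - Real.log v| ≤ |ρ| * (1 / (lam * n)) :=
          mul_le_mul_of_nonneg_left habs2 habs
      _ = |ρ| / (lam * n) := by ring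
  have hsum : C₂ / n = 2 * ρ ^ 2 / (lam ^ 2 * n) + 2 * |ρ| / (lam ^ 2 * n) + |ρ| / (lam * n) := by
    rw [hC2]; field_simp
  have hLS3 : |L - S3| ≤ C₂ / n := by
    have t1 := abs_sub_le L S1 (ρ * S2)
    have t2 := abs_sub_le L (ρ * S2) S3
    linarith
  have hC2n : C₂ / n ≤ 1 := by rw [div_le_one hn0]; linarith
  have hlog0 : 0 ≤ Real.log ((lam + x) / lam) :=
    Real.log_nonneg (by rw [le_div_iff₀ hlam]; linarith)
  have hlogle : Real.log ((lam + x) / lam) ≤ Real.log ((lam + 1) / lam) := by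
    apply Real.log_le_log (by positivity)
    gcongr
  have hS3B : |S3| ≤ B := by
    rw [hS3def, hBdef, abs_mul, abs_of_nonneg hlog0]
    exact mul_le_mul_of_nonneg_left hlogle habs
  have htarget : ((lam + x) / lam) ^ ((r:ℝ) - a) = Real.exp S3 := by
    rw [Real.rpow_def_of_pos (by positivity), hS3def, mul_comm]
  rw [haCoef, htarget]
  have hadd : S3 + (L - S3) = L := by ring
  have hfact : Real.exp L - Real.exp S3 = Real.exp S3 * (Real.exp (L - S3) - 1) := by
    rw [mul_sub, ← Real.exp_add, mul_one, hadd]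
  rw [hfact, abs_mul, Real.abs_exp]
  have h5 : |Real.exp (L - S3) - 1| ≤ 2 * |L - S3| :=
    Real.abs_exp_sub_one_le (le_trans hLS3 hC2n)
  have h6 : Real.exp S3 ≤ Real.exp B := Real.exp_le_exp.mpr (le_trans (le_abs_self S3) hS3B)
  calc Real.exp S3 * |Real.exp (L - S3) - 1| ≤ Real.exp B * (2 * (C₂ / n)) := by
        apply mul_le_mul h6 (by linarith) (abs_nonneg _) (Real.exp_nonneg _)
      _ = 2 * Real.exp B * C₂ / n := by ring
  
end
end
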